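/- Let T ∈ C^m ⊗ C^m ⊗ C^m be 1_A-generic with α ∈ A* such that T(α) : B* → C is invertible, and suppose T is 111-abundant. Then the space E_α(T) := T(A*) ∘ T(α)^{-1} ⊆ End(C) is m-dimensional, consists of pairwise commuting endomorphisms, and is closed under composition; moreover T is concise and its triple intersection space has dimension exactly m (T is 111-sharp). -/
import Mathlib


open TensorProduct

noncomputable section

namespace Paper

variable {A B C : Type*} [AddCommGroup A] [Module ℂ A]
  [AddCommGroup B] [Module ℂ B] [AddCommGroup C] [Module ℂ C]

/-- Action of `X ∈ End(A)` on the `A`-factor: `X ∘_A T = (X ⊗ Id_B ⊗ Id_C)(T)`. -/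
def actA (X : Module.End ℂ A) : A ⊗[ℂ] (B ⊗[ℂ] C) →ₗ[ℂ] A ⊗[ℂ] (B ⊗[ℂ] C) :=
  TensorProduct.map X LinearMap.id

/-- Action of `Y ∈ End(B)` on the `B`-factor. -/
def actB (Y : Module.End ℂ B) : A ⊗[ℂ] (B ⊗[ℂ] C) →ₗ[ℂ] A ⊗[ℂ] (B ⊗[ℂ] C) :=
  TensorProduct.map LinearMap.id (TensorProduct.map Y LinearMap.id)

/-- Action of `Z ∈ End(C)` on the `C`-factor. -/
def actC (Z : Module.End ℂ C) : A ⊗[ℂ] (B ⊗[ℂ] C) →ₗ[ℂ] A ⊗[ℂ] (B ⊗[ℂ] C) :=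
  TensorProduct.map LinearMap.id (TensorProduct.map LinearMap.id Z)

/-- Contraction of the `A`-factor against `α ∈ A*`: `T ↦ T(α) ∈ B ⊗ C`. -/
def contrA (α : Module.Dual ℂ A) : A ⊗[ℂ] (B ⊗[ℂ] C) →ₗ[ℂ] B ⊗[ℂ] C :=
  (TensorProduct.lid ℂ (B ⊗[ℂ] C)).toLinearMap ∘ₗ TensorProduct.map α LinearMap.id

/-- Contraction of the `B`-factor against `β ∈ B*`: `T ↦ T(β) ∈ A ⊗ C`. -/
def contrB (β : Module.Dual ℂ B) : A ⊗[ℂ] (B ⊗[ℂ] C) →ₗ[ℂ] A ⊗[ℂ] C :=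
  TensorProduct.map LinearMap.id
    ((TensorProduct.lid ℂ C).toLinearMap ∘ₗ TensorProduct.map β LinearMap.id)

/-- Contraction of the `C`-factor against `γ ∈ C*`: `T ↦ T(γ) ∈ A ⊗ B`. -/
def contrC (γ : Module.Dual ℂ C) : A ⊗[ℂ] (B ⊗[ℂ] C) →ₗ[ℂ] A ⊗[ℂ] B :=
  TensorProduct.map LinearMap.id
    ((TensorProduct.rid ℂ B).toLinearMap ∘ₗ TensorProduct.map LinearMap.id γ)

/-- A tensor is concise if all three flattening maps are injective. -/
def Concise (T : A ⊗[ℂ] (B ⊗[ℂ] C)) : Prop :=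
  Function.Injective (fun α : Module.Dual ℂ A => contrA α T) ∧
  Function.Injective (fun β : Module.Dual ℂ B => contrB β T) ∧
  Function.Injective (fun γ : Module.Dual ℂ C => contrC γ T)

/-- View an element of `M ⊗ N` as a linear map `M* → N`. -/
def toHom {M N : Type*} [AddCommGroup M] [Module ℂ M] [AddCommGroup N] [Module ℂ N] :
    M ⊗[ℂ] N →ₗ[ℂ] (Module.Dual ℂ M →ₗ[ℂ] N) :=
  (dualTensorHom ℂ (Module.Dual ℂ M) N).comp
    (TensorProduct.map (Module.Dual.eval ℂ M) LinearMap.id)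

/-- A triple `(X,Y,Z)` is compatible with `T` if `X∘_A T = Y∘_B T = Z∘_C T`. -/
def Compat (T : A ⊗[ℂ] (B ⊗[ℂ] C))
    (p : Module.End ℂ A × Module.End ℂ B × Module.End ℂ C) : Prop :=
  actA p.1 T = actB p.2.1 T ∧ actB p.2.1 T = actC p.2.2 T

/-- The subspace `T(A*) ⊗ A ⊆ A ⊗ B ⊗ C`. -/
def spanA (T : A ⊗[ℂ] (B ⊗[ℂ] C)) : Submodule ℂ (A ⊗[ℂ] (B ⊗[ℂ] C)) :=
  Submodule.span ℂ {x | ∃ (a : A) (α : Module.Dual ℂ A), x = a ⊗ₜ[ℂ] contrA α T}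

/-- The subspace `T(B*) ⊗ B ⊆ A ⊗ B ⊗ C` (factors in the correct positions). -/
def spanB (T : A ⊗[ℂ] (B ⊗[ℂ] C)) : Submodule ℂ (A ⊗[ℂ] (B ⊗[ℂ] C)) :=
  Submodule.span ℂ {x | ∃ (b : B) (β : Module.Dual ℂ B),
    x = (TensorProduct.leftComm ℂ B A C) (b ⊗ₜ[ℂ] contrB β T)}

/-- The subspace `T(C*) ⊗ C ⊆ A ⊗ B ⊗ C` (factors in the correct positions). -/
def spanC (T : A ⊗[ℂ] (B ⊗[ℂ] C)) : Submodule ℂ (A ⊗[ℂ] (B ⊗[ℂ] C)) :=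
  Submodule.span ℂ {x | ∃ (c : C) (γ : Module.Dual ℂ C),
    x = (TensorProduct.congr (LinearEquiv.refl ℂ A) (TensorProduct.comm ℂ C B))
      ((TensorProduct.leftComm ℂ C A B) (c ⊗ₜ[ℂ] contrC γ T))}

/-- The triple intersection `(T(A*)⊗A) ∩ (T(B*)⊗B) ∩ (T(C*)⊗C)`. -/
def tripleInt (T : A ⊗[ℂ] (B ⊗[ℂ] C)) : Submodule ℂ (A ⊗[ℂ] (B ⊗[ℂ] C)) :=
  spanA T ⊓ spanB T ⊓ spanC T

-- basic computation lemmas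
lemma toHom_tmul {M N : Type*} [AddCommGroup M] [Module ℂ M] [AddCommGroup N] [Module ℂ N]
    (x : M) (n : N) (φ : Module.Dual ℂ M) : toHom (x ⊗ₜ[ℂ] n) φ = φ x • n := by
  simp [toHom, dualTensorHom_apply]

set_option synthInstance.maxHeartbeats 1000000 in
lemma toHom_bijective {M N : Type*} [AddCommGroup M] [Module ℂ M] [AddCommGroup N] [Module ℂ N]
    [FiniteDimensional ℂ M] :
    Function.Bijective (toHom : M ⊗[ℂ] N →ₗ[ℂ] (Module.Dual ℂ M →ₗ[ℂ] N)) := by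
  have h : ∀ x : M ⊗[ℂ] N, toHom x = (dualTensorHomEquiv ℂ (Module.Dual ℂ M) N)
      ((TensorProduct.congr (Module.evalEquiv ℂ M) (LinearEquiv.refl ℂ N)) x) := by
    intro x
    induction x using TensorProduct.induction_on with
    | zero => simp only [map_zero]
    | tmul m n =>
        simp [toHom, dualTensorHomEquiv, dualTensorHomEquivOfBasis_apply,
          TensorProduct.congr_tmul]
    | add x y hx hy => simp [map_add, hx, hy]
  have : ⇑(toHom : M ⊗[ℂ] N →ₗ[ℂ] (Module.Dual ℂ M →ₗ[ℂ] N)) =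
      ⇑(dualTensorHomEquiv ℂ (Module.Dual ℂ M) N) ∘
        ⇑(TensorProduct.congr (Module.evalEquiv ℂ M) (LinearEquiv.refl ℂ N)) := funext h
  rw [this]
  exact (dualTensorHomEquiv ℂ (Module.Dual ℂ M) N).bijective.comp
    (TensorProduct.congr (Module.evalEquiv ℂ M) (LinearEquiv.refl ℂ N)).bijective

lemma contrA_tmul (α : Module.Dual ℂ A) (a : A) (u : B ⊗[ℂ] C) :
    contrA α (a ⊗ₜ[ℂ] u) = α a • u := by
  simp [contrA]

lemma contrA_eq_toHom (α : Module.Dual ℂ A) (S : A ⊗[ℂ] (B ⊗[ℂ] C)) :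
    contrA α S = toHom S α := by
  induction S using TensorProduct.induction_on with
  | zero => simp
  | tmul a u => simp [contrA_tmul, toHom_tmul]
  | add x y hx hy => simp [map_add, hx, hy]

lemma toHom_contrB (β : Module.Dual ℂ B) (α' : Module.Dual ℂ A) (S : A ⊗[ℂ] (B ⊗[ℂ] C)) :
    toHom (contrB β S) α' = toHom (contrA α' S) β := by
  induction S using TensorProduct.induction_on with
  | zero => simp
  | tmul a u =>
      induction u using TensorProduct.induction_on with
      | zero => simp [tmul_zero]
      | tmul b c => simp [contrB, contrA_tmul, toHom_tmul, smul_smul, mul_comm]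
      | add x y hx hy => simp only [tmul_add, map_add, LinearMap.add_apply, hx, hy]
  | add x y hx hy => simp [map_add, hx, hy]

lemma toHom_contrC (γ : Module.Dual ℂ C) (α' : Module.Dual ℂ A) (β : Module.Dual ℂ B)
    (S : A ⊗[ℂ] (B ⊗[ℂ] C)) :
    β (toHom (contrC γ S) α') = γ (toHom (contrA α' S) β) := by
  induction S using TensorProduct.induction_on with
  | zero => simp
  | tmul a u =>
      induction u using TensorProduct.induction_on with
      | zero => simp [tmul_zero]
      | tmul b c => simp [contrC, contrA_tmul, toHom_tmul, smul_smul, mul_comm, mul_left_comm, mul_assoc]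
      | add x y hx hy => simp only [tmul_add, map_add, LinearMap.add_apply, map_add, hx, hy]
  | add x y hx hy => simp [map_add, hx, hy]

lemma genB (α' : Module.Dual ℂ A) (b : B) (u : A ⊗[ℂ] C) (β : Module.Dual ℂ B) :
    toHom (contrA α' ((TensorProduct.leftComm ℂ B A C) (b ⊗ₜ[ℂ] u))) β = β b • toHom u α' := by
  induction u using TensorProduct.induction_on with
  | zero => simp [tmul_zero]
  | tmul a c => simp [TensorProduct.leftComm_tmul, contrA_tmul, toHom_tmul, smul_smul, mul_comm]
  | add x y hx hy => simp only [tmul_add, map_add, LinearMap.add_apply, smul_add, hx, hy]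

lemma genC (α' : Module.Dual ℂ A) (c : C) (u : A ⊗[ℂ] B) (β : Module.Dual ℂ B) :
    toHom (contrA α' ((TensorProduct.congr (LinearEquiv.refl ℂ A) (TensorProduct.comm ℂ C B))
      ((TensorProduct.leftComm ℂ C A B) (c ⊗ₜ[ℂ] u)))) β = β (toHom u α') • c := by
  induction u using TensorProduct.induction_on with
  | zero => simp [tmul_zero]
  | tmul a b => simp [TensorProduct.leftComm_tmul, TensorProduct.congr_tmul,
      TensorProduct.comm_tmul, contrA_tmul, toHom_tmul, smul_smul, mul_comm]
  | add x y hx hy => simp only [tmul_add, map_add, LinearMap.add_apply, map_add, add_smul, hx, hy]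



section MainAux

lemma memA_aux (T S : A ⊗[ℂ] (B ⊗[ℂ] C)) (hS : S ∈ spanA T) (α' : Module.Dual ℂ A) :
    toHom (contrA α' S) ∈
      LinearMap.range ((toHom : B ⊗[ℂ] C →ₗ[ℂ] _) ∘ₗ (toHom T)) := by
  unfold spanA at hS
  induction hS using Submodule.span_induction with
  | mem x hx =>
      obtain ⟨a, α'', rfl⟩ := hx
      rw [contrA_tmul, map_smul]
      refine Submodule.smul_mem _ _ ⟨α'', ?_⟩
      simp only [LinearMap.comp_apply, contrA_eq_toHom]
  | zero => simp only [map_zero]; exact Submodule.zero_mem _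
  | add x y hx hy hx' hy' => rw [map_add, map_add]; exact Submodule.add_mem _ hx' hy'
  | smul t x hx hx' => rw [map_smul, map_smul]; exact Submodule.smul_mem _ _ hx'

lemma memB_aux (T : A ⊗[ℂ] (B ⊗[ℂ] C)) (α : Module.Dual ℂ A)
    (hα : Function.Bijective (toHom (contrA α T))) {S : A ⊗[ℂ] (B ⊗[ℂ] C)}
    (hS : S ∈ spanB T) (α' : Module.Dual ℂ A) (β : Module.Dual ℂ B) :
    toHom (contrA α' S) β = toHom (contrA α' T)
      ((LinearEquiv.ofBijective (toHom (contrA α T)) hα).symm (toHom (contrA α S) β)) := by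
  have hQP : ∀ x, (LinearEquiv.ofBijective (toHom (contrA α T)) hα).symm
      (toHom (contrA α T) x) = x :=
    fun x => (LinearEquiv.ofBijective (toHom (contrA α T)) hα).symm_apply_apply x
  unfold spanB at hS
  induction hS using Submodule.span_induction with
  | mem x hx =>
      obtain ⟨b, β', rfl⟩ := hx
      rw [genB, genB, toHom_contrB, toHom_contrB, map_smul, map_smul, hQP]
  | zero => simp
  | add x y hx hy hx' hy' => simp only [map_add, LinearMap.add_apply, hx', hy']
  | smul t x hx hx' => simp only [map_smul, LinearMap.smul_apply, hx']

lemma memC_aux (T : A ⊗[ℂ] (B ⊗[ℂ] C)) (α : Module.Dual ℂ A)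
    (hα : Function.Bijective (toHom (contrA α T))) {S : A ⊗[ℂ] (B ⊗[ℂ] C)}
    (hS : S ∈ spanC T) (α' : Module.Dual ℂ A) (β : Module.Dual ℂ B) :
    toHom (contrA α' S) β = toHom (contrA α S)
      ((LinearEquiv.ofBijective (toHom (contrA α T)) hα).symm (toHom (contrA α' T) β)) := by
  have hPQ : ∀ c, toHom (contrA α T)
      ((LinearEquiv.ofBijective (toHom (contrA α T)) hα).symm c) = c :=
    fun c => (LinearEquiv.ofBijective (toHom (contrA α T)) hα).apply_symm_apply c
  unfold spanC at hS
  induction hS using Submodule.span_induction with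
  | mem x hx =>
      obtain ⟨c, γ, rfl⟩ := hx
      rw [genC, genC]
      congr 1
      rw [toHom_contrC, toHom_contrC, hPQ]
  | zero => simp
  | add x y hx hy hx' hy' => simp only [map_add, LinearMap.add_apply, hx', hy']
  | smul t x hx hx' => simp only [map_smul, LinearMap.smul_apply, hx']

lemma ker_aux [FiniteDimensional ℂ A] [FiniteDimensional ℂ B]
    (T : A ⊗[ℂ] (B ⊗[ℂ] C)) (α : Module.Dual ℂ A)
    (hα : Function.Bijective (toHom (contrA α T))) {S : A ⊗[ℂ] (B ⊗[ℂ] C)}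
    (hSC : S ∈ spanC T) (h : toHom (contrA α S) = 0) : S = 0 := by
  have hall : ∀ α' : Module.Dual ℂ A, contrA α' S = 0 := by
    intro α'
    apply toHom_bijective.injective
    rw [map_zero]
    apply LinearMap.ext
    intro β
    rw [memC_aux T α hα hSC α' β, h]
    simp
  apply toHom_bijective.injective
  rw [map_zero]
  apply LinearMap.ext
  intro α'
  rw [← contrA_eq_toHom, hall]
  simp

lemma key_aux (T : A ⊗[ℂ] (B ⊗[ℂ] C)) (α : Module.Dual ℂ A)
    (hα : Function.Bijective (toHom (contrA α T))) {S : A ⊗[ℂ] (B ⊗[ℂ] C)}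
    (hSB : S ∈ spanB T) (hSC : S ∈ spanC T) (e f : Module.End ℂ C)
    (α₁ : Module.Dual ℂ A)
    (he : e ∘ₗ toHom (contrA α T) = toHom (contrA α₁ T))
    (hS : toHom (contrA α S) = f ∘ₗ toHom (contrA α T)) (β : Module.Dual ℂ B) :
    toHom (contrA α₁ S) β = e (f (toHom (contrA α T) β)) ∧
    toHom (contrA α₁ S) β = f (e (toHom (contrA α T) β)) := by
  have hPQ : ∀ c, toHom (contrA α T)
      ((LinearEquiv.ofBijective (toHom (contrA α T)) hα).symm c) = c :=
    fun c => (LinearEquiv.ofBijective (toHom (contrA α T)) hα).apply_symm_apply c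
  constructor
  · rw [memB_aux T α hα hSB α₁ β, hS, ← he]
    simp only [LinearMap.comp_apply, hPQ]
  · rw [memC_aux T α hα hSC α₁ β, hS, ← he]
    simp only [LinearMap.comp_apply, hPQ]

end MainAux

end Paper

set_option maxHeartbeats 2000000 in
open Paper in
/-- if `T ∈ ℂ^m⊗ℂ^m⊗ℂ^m` is `1_A`-generic (with `T(α)` invertible) and
111-abundant, then `E_α(T) = T(A*)T(α)⁻¹ ⊆ End(C)` is `m`-dimensional, abelian and closed
under composition; moreover `T` is concise and 111-sharp.  Here an endomorphism `e` lies in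
`E_α(T)` iff `e ∘ T(α) = T(α')` for some `α'`. -/
theorem stmt9 {A B C : Type*} [AddCommGroup A] [Module ℂ A] [AddCommGroup B] [Module ℂ B]
    [AddCommGroup C] [Module ℂ C] [FiniteDimensional ℂ A] [FiniteDimensional ℂ B]
    [FiniteDimensional ℂ C] (m : ℕ)
    (hA : Module.finrank ℂ A = m) (hB : Module.finrank ℂ B = m)
    (hC : Module.finrank ℂ C = m)
    (T : A ⊗[ℂ] (B ⊗[ℂ] C)) (α : Module.Dual ℂ A)
    (hα : Function.Bijective (toHom (contrA α T)))
    (habundant : m ≤ Module.finrank ℂ (tripleInt T)) :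
    Module.finrank ℂ (Submodule.span ℂ
      {e : Module.End ℂ C | ∃ α' : Module.Dual ℂ A,
        e ∘ₗ toHom (contrA α T) = toHom (contrA α' T)}) = m ∧
    (∀ e ∈ {e : Module.End ℂ C | ∃ α' : Module.Dual ℂ A,
        e ∘ₗ toHom (contrA α T) = toHom (contrA α' T)},
     ∀ f ∈ {e : Module.End ℂ C | ∃ α' : Module.Dual ℂ A,
        e ∘ₗ toHom (contrA α T) = toHom (contrA α' T)}, e * f = f * e) ∧
    (∀ e ∈ {e : Module.End ℂ C | ∃ α' : Module.Dual ℂ A,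
        e ∘ₗ toHom (contrA α T) = toHom (contrA α' T)},
     ∀ f ∈ {e : Module.End ℂ C | ∃ α' : Module.Dual ℂ A,
        e ∘ₗ toHom (contrA α T) = toHom (contrA α' T)},
      e * f ∈ {e : Module.End ℂ C | ∃ α' : Module.Dual ℂ A,
        e ∘ₗ toHom (contrA α T) = toHom (contrA α' T)}) ∧
    Concise T ∧ Module.finrank ℂ (tripleInt T) = m := by
  classical

  have hdualA : Module.finrank ℂ (Module.Dual ℂ A) = m := by
    rw [Subspace.dual_finrank_eq]; exact hA
  set L : Module.Dual ℂ A →ₗ[ℂ] (Module.Dual ℂ B →ₗ[ℂ] C) :=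
    (toHom : B ⊗[ℂ] C →ₗ[ℂ] _) ∘ₗ toHom T with hLdef
  have hL : ∀ α' : Module.Dual ℂ A, L α' = toHom (contrA α' T) := by
    intro α'
    rw [hLdef]
    simp only [LinearMap.comp_apply, contrA_eq_toHom]
  have hSA : ∀ S : tripleInt T, (S : A ⊗[ℂ] (B ⊗[ℂ] C)) ∈ spanA T :=
    fun S => (Submodule.mem_inf.mp (Submodule.mem_inf.mp S.2).1).1
  have hSB : ∀ S : tripleInt T, (S : A ⊗[ℂ] (B ⊗[ℂ] C)) ∈ spanB T :=
    fun S => (Submodule.mem_inf.mp (Submodule.mem_inf.mp S.2).1).2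
  have hSC : ∀ S : tripleInt T, (S : A ⊗[ℂ] (B ⊗[ℂ] C)) ∈ spanC T :=
    fun S => (Submodule.mem_inf.mp S.2).2
  set Ψ : tripleInt T →ₗ[ℂ] (Module.Dual ℂ B →ₗ[ℂ] C) :=
    (toHom : B ⊗[ℂ] C →ₗ[ℂ] _) ∘ₗ (contrA α) ∘ₗ (tripleInt T).subtype with hΨdef
  have hΨ : ∀ S : tripleInt T, Ψ S = toHom (contrA α (S : A ⊗[ℂ] (B ⊗[ℂ] C))) :=
    fun S => rfl
  have hkerΨ : LinearMap.ker Ψ = ⊥ := by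
    refine (Submodule.eq_bot_iff _).mpr ?_
    intro S hker
    exact ZeroMemClass.coe_eq_zero.mp
      (ker_aux T α hα (hSC S) (by rw [← hΨ]; exact LinearMap.mem_ker.mp hker))
  have hΨinj : Function.Injective Ψ := LinearMap.ker_eq_bot.mp hkerΨ
  have hrange : LinearMap.range Ψ ≤ LinearMap.range L := by
    rintro x ⟨S, rfl⟩
    rw [hΨ]
    exact memA_aux T _ (hSA S) α
  have e1 := LinearMap.finrank_range_of_inj hΨinj
  have e2 := Submodule.finrank_mono hrange
  have e3 := LinearMap.finrank_range_le L
  have hdim_tri : Module.finrank ℂ (tripleInt T) = m := by omega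
  have hdimW : Module.finrank ℂ (LinearMap.range L) = m := by omega
  have hrangeW : LinearMap.range Ψ = LinearMap.range L :=
    Submodule.eq_of_le_of_finrank_le hrange (by omega)
  have hLinj : Function.Injective L := by
    have h5 := LinearMap.finrank_range_add_finrank_ker L
    have h6 : Module.finrank ℂ (LinearMap.ker L) = 0 := by omega
    exact LinearMap.ker_eq_bot.mp (Submodule.finrank_eq_zero.mp h6)
  have conciseA : Function.Injective (fun α' : Module.Dual ℂ A => contrA α' T) := by
    intro a b h
    have h' : contrA a T = contrA b T := h
    apply hLinj
    rw [hL a, hL b, h']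
  have conciseB : Function.Injective (fun β : Module.Dual ℂ B => contrB β T) := by
    intro b₁ b₂ h
    have h' : contrB b₁ T = contrB b₂ T := h
    apply hα.1
    show toHom (contrA α T) b₁ = toHom (contrA α T) b₂
    rw [← toHom_contrB, ← toHom_contrB, h']
  have conciseC : Function.Injective (fun γ : Module.Dual ℂ C => contrC γ T) := by
    intro γ₁ γ₂ h
    have h' : contrC γ₁ T = contrC γ₂ T := h
    apply LinearMap.ext
    intro c
    obtain ⟨β, rfl⟩ := hα.2 c
    rw [← toHom_contrC, ← toHom_contrC, h']
  set Pe : Module.Dual ℂ B ≃ₗ[ℂ] C := LinearEquiv.ofBijective (toHom (contrA α T)) hα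
    with hPe
  set ρ : Module.End ℂ C ≃ₗ[ℂ] (Module.Dual ℂ B →ₗ[ℂ] C) :=
    LinearEquiv.arrowCongr Pe.symm (LinearEquiv.refl ℂ C) with hρ
  have hρe : ∀ e : Module.End ℂ C, ρ e = e ∘ₗ toHom (contrA α T) := by
    intro e
    apply LinearMap.ext
    intro β
    rw [hρ]
    simp only [LinearEquiv.arrowCongr_apply, LinearEquiv.refl_apply, LinearEquiv.symm_symm,
      LinearMap.comp_apply, hPe, LinearEquiv.ofBijective_apply]
  have hEset : {e : Module.End ℂ C | ∃ α' : Module.Dual ℂ A,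
      e ∘ₗ toHom (contrA α T) = toHom (contrA α' T)} =
      ↑(Submodule.comap (ρ : Module.End ℂ C →ₗ[ℂ] (Module.Dual ℂ B →ₗ[ℂ] C))
        (LinearMap.range L)) := by
    ext e
    simp only [Set.mem_setOf_eq, SetLike.mem_coe, Submodule.mem_comap, LinearMap.mem_range,
      LinearEquiv.coe_coe, hρe]
    constructor
    · rintro ⟨α', h⟩
      exact ⟨α', (hL α').trans h.symm⟩
    · rintro ⟨α', h⟩
      exact ⟨α', h.symm.trans (hL α')⟩
  have hdimE : Module.finrank ℂ (Submodule.span ℂ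
      {e : Module.End ℂ C | ∃ α' : Module.Dual ℂ A,
        e ∘ₗ toHom (contrA α T) = toHom (contrA α' T)}) = m := by
    rw [hEset, Submodule.span_eq, Submodule.comap_equiv_eq_map_symm,
      LinearEquiv.finrank_map_eq]
    exact hdimW
  have main : ∀ e f : Module.End ℂ C,
      (∃ α₁ : Module.Dual ℂ A, e ∘ₗ toHom (contrA α T) = toHom (contrA α₁ T)) →
      (∃ α₂ : Module.Dual ℂ A, f ∘ₗ toHom (contrA α T) = toHom (contrA α₂ T)) →
      e * f = f * e ∧
      ∃ α₃ : Module.Dual ℂ A, (e * f) ∘ₗ toHom (contrA α T) = toHom (contrA α₃ T) := by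
    rintro e f ⟨α₁, he⟩ ⟨α₂, hf⟩
    have hfP : (f ∘ₗ toHom (contrA α T)) ∈ LinearMap.range L := ⟨α₂, (hL α₂).trans hf.symm⟩
    rw [← hrangeW] at hfP
    obtain ⟨S, hS⟩ := hfP
    rw [hΨ] at hS
    have key := fun β => key_aux T α hα (hSB S) (hSC S) e f α₁ he hS β
    constructor
    · apply LinearMap.ext
      intro c
      obtain ⟨β, rfl⟩ := hα.2 c
      rw [Module.End.mul_apply, Module.End.mul_apply, ← (key β).1, (key β).2]
    · obtain ⟨α₃, h₃⟩ := memA_aux T _ (hSA S) α₁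
      have h₃' : toHom (contrA α₃ T) = toHom (contrA α₁ (S : A ⊗[ℂ] (B ⊗[ℂ] C))) := by
        rw [← hL α₃]; exact h₃
      refine ⟨α₃, ?_⟩
      apply LinearMap.ext
      intro β
      rw [LinearMap.comp_apply, Module.End.mul_apply, h₃', ← (key β).1]
  refine ⟨hdimE, ?_, ?_, ⟨conciseA, conciseB, conciseC⟩, hdim_tri⟩
  · intro e he f hf
    exact (main e f he hf).1
  · intro e he f hf
    exact (main e f he hf).2
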